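/- Let p > 0, q with gcd(p,q) = 1, and let q* ∈ (0,p), p* satisfy p*p + q*q = 1. Let r be odd with c = gcd(p, r) > 1 and suppose c | q* + η for η ∈ {1, -1}. Then the exponent expression -( (r/c)' (q + q* - η p* p) )/(pc) + 2η (p/c)'/(rc) - 12 s(q,p)/r, multiplied by rc·p, is an integer; i.e., e_r^{12s(q,p)}·e_{pc}^{-(r/c)'(q+q*-ηp*p)}·e_{rc}^{2η(p/c)'} is an r·c·p-th root of unity that is in fact an r-th root of unity e_r^k for some integer k. -/

import Mathlib

open Complex

/-- The sawtooth function `((x))`. -/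
noncomputable def saw (x : ℚ) : ℚ := if x.den = 1 then 0 else x - ⌊x⌋ - 1/2

/-- The Dedekind sum `s(q, p)`. -/
noncomputable def dedekindSum (q p : ℤ) : ℚ :=
  ∑ k ∈ Finset.range p.natAbs, saw (k / p) * saw (k * q / p)

/-!
Write `r_k = k q mod p`. Since `k ↦ r_k` permutes `{0, …, p - 1}`, evaluating the sawtooth
functions gives `12 p² s(q, p) = 12 ∑ k r_k - 3 p² (p - 1)`, while `∑ (k q - r_k)² ≡ 0 (mod p²)`
gives `2 q ∑ k r_k ≡ (q² + 1) ∑ k² (mod p²)`. Hence `N = 12 p s(q, p)` is an integer with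
`q N ≡ q² + 1`, i.e. `N ≡ q + q* (mod p)` (Rademacher's congruence).

Multiplying the total exponent by `p r c` and using `(p/c)' p + (r/c)' r = c`, the claim becomes
`p c ∣ N c - (r/c)' (q + q* - η p* p) r + 2 η (p/c)' p`, which follows from `p ∣ N - q - q*` and
`c ∣ q* + η`.
-/

open Finset

lemma sum_range_natCast_eq_sum_zmod {M : Type*} [AddCommMonoid M] (n : ℕ) [NeZero n]
    (f : ZMod n → M) : ∑ k ∈ range n, f k = ∑ x : ZMod n, f x := by
  obtain ⟨m, rfl⟩ := Nat.exists_eq_succ_of_ne_zero (NeZero.ne n)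
  rw [← Fin.sum_univ_eq_sum_range (fun k => f k)]
  exact sum_congr rfl fun i _ => congrArg f (Fin.cast_val_eq_self i)

lemma sum_range_comp_mul_emod {M : Type*} [AddCommMonoid M] {n : ℕ} {q : ℤ}
    (hq : IsCoprime q n) (f : ℤ → M) :
    ∑ k ∈ range n, f (k * q % n) = ∑ k ∈ range n, f k := by
  rcases n.eq_zero_or_pos with rfl | hn
  · simp
  have : NeZero n := ⟨hn.ne'⟩
  let g : ZMod n → M := fun x => f x.val
  calc ∑ k ∈ range n, f (k * q % n) = ∑ k ∈ range n, g (k * q) :=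
        sum_congr rfl fun k _ => by simp only [g]; rw [← ZMod.val_intCast]; push_cast; rfl
    _ = ∑ x : ZMod n, g (x * ZMod.unitOfIsCoprime q hq) :=
        sum_range_natCast_eq_sum_zmod n fun x => g (x * q)
    _ = ∑ x : ZMod n, g x := Fintype.sum_equiv (Units.mulRight _) _ _ fun _ => rfl
    _ = ∑ k ∈ range n, f k := by
        rw [← sum_range_natCast_eq_sum_zmod]
        exact sum_congr rfl fun k hk => by
          simp only [g, ZMod.val_natCast, Nat.mod_eq_of_lt (mem_range.1 hk)]

lemma two_mul_sum_range_natCast {R : Type*} [CommRing R] (n : ℕ) :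
    2 * ∑ k ∈ range n, (k : R) = n * (n - 1) := by
  induction n with
  | zero => simp
  | succ n ih => rw [sum_range_succ, mul_add, ih]; push_cast; ring

lemma six_mul_sum_range_natCast_sq {R : Type*} [CommRing R] (n : ℕ) :
    6 * ∑ k ∈ range n, (k : R) ^ 2 = n * (n - 1) * (2 * n - 1) := by
  induction n with
  | zero => simp
  | succ n ih => rw [sum_range_succ, mul_add, ih]; push_cast; ring

lemma saw_intCast_div_natCast {n : ℕ} {a : ℤ} (hn : n ≠ 0) (h : ¬ (n : ℤ) ∣ a) :
    saw (a / n) = (a % n : ℤ) / n - 1 / 2 := by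
  have hden : ((a : ℚ) / n).den ≠ 1 := by
    rwa [← Int.cast_natCast, Ne, Rat.den_div_intCast_eq_one_iff _ _ (by exact_mod_cast hn)]
  have hn' : (n : ℚ) ≠ 0 := by exact_mod_cast hn
  rw [saw, if_neg hden, Rat.floor_intCast_div_natCast, Int.emod_def]
  push_cast
  field_simp

lemma dedekindSum_eq_sum_range {n : ℕ} {q : ℤ} (hn : 0 < n) (hq : IsCoprime q n) :
    dedekindSum q n =
      ∑ k ∈ range n, ((k : ℚ) / n - 1 / 2) * ((k * q % n : ℤ) / n - 1 / 2) - 1 / 4 := by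
  rw [dedekindSum, Int.natAbs_natCast]
  obtain ⟨m, rfl⟩ := Nat.exists_eq_add_one_of_ne_zero hn.ne'
  rw [sum_range_succ', sum_range_succ']
  rw [add_sub_assoc]
  congr 1
  · refine sum_congr rfl fun k hk => ?_
    have hk' : k + 1 < m + 1 := by simpa using hk
    have h1 : ¬ ((m + 1 : ℕ) : ℤ) ∣ ((k + 1 : ℕ) : ℤ) := by
      exact_mod_cast Nat.not_dvd_of_pos_of_lt k.succ_pos hk'
    have h2 : ¬ ((m + 1 : ℕ) : ℤ) ∣ ((k + 1 : ℕ) : ℤ) * q :=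
      fun h => h1 (hq.symm.dvd_of_dvd_mul_right h)
    have e1 := saw_intCast_div_natCast m.succ_ne_zero h1
    have e2 := saw_intCast_div_natCast m.succ_ne_zero h2
    push_cast at e1 e2 ⊢
    rw [e1, e2, Int.emod_eq_of_lt (by positivity) (by exact_mod_cast hk')]
    push_cast
    ring
  · simp [saw]
    norm_num

lemma twelve_mul_sq_mul_dedekindSum {n : ℕ} {q : ℤ} (hn : 0 < n) (hq : IsCoprime q n) :
    12 * n ^ 2 * dedekindSum q n =
      12 * ((∑ k ∈ range n, k * (k * q % n) : ℤ) : ℚ) - 3 * n ^ 2 * (n - 1) := by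
  have hsum : 2 * ∑ k ∈ range n, (k : ℚ) = n * (n - 1) := two_mul_sum_range_natCast n
  have hperm : ∑ k ∈ range n, ((k * q % n : ℤ) : ℚ) = ∑ k ∈ range n, (k : ℚ) :=
    (sum_range_comp_mul_emod hq ((↑) : ℤ → ℚ)).trans (by simp)
  have hn' : (n : ℚ) ≠ 0 := by positivity
  have hexp : ∑ k ∈ range n, ((k : ℚ) / n - 1 / 2) * ((k * q % n : ℤ) / n - 1 / 2) =
      ∑ k ∈ range n, (((k * (k * q % n) : ℤ) : ℚ) / n ^ 2 - k / (2 * n)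
        - ((k * q % n : ℤ) : ℚ) / (2 * n) + 1 / 4) :=
    sum_congr rfl fun k _ => by push_cast; field_simp; ring
  rw [dedekindSum_eq_sum_range hn hq, hexp, Int.cast_sum]
  simp only [sum_add_distrib, sum_sub_distrib, ← sum_div, hperm, sum_const, card_range, nsmul_eq_mul]
  field_simp
  linear_combination (-48 * (n : ℚ)) * hsum

lemma sq_dvd_sum_range_sq_sub {n : ℕ} {q : ℤ} (hq : IsCoprime q n) :
    (n : ℤ) ^ 2 ∣
      (q ^ 2 + 1) * ∑ k ∈ range n, (k : ℤ) ^ 2 - 2 * q * ∑ k ∈ range n, k * (k * q % n) := by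
  have hperm : ∑ k ∈ range n, (k * q % n) ^ 2 = ∑ k ∈ range n, (k : ℤ) ^ 2 :=
    sum_range_comp_mul_emod hq (· ^ 2)
  have hexp : ∑ k ∈ range n, (k * q - k * q % n) ^ 2 =
      (q ^ 2 + 1) * ∑ k ∈ range n, (k : ℤ) ^ 2 - 2 * q * ∑ k ∈ range n, k * (k * q % n) :=
    calc ∑ k ∈ range n, (k * q - k * q % n) ^ 2
        = ∑ k ∈ range n, (q ^ 2 * k ^ 2 - 2 * q * (k * (k * q % n)) + (k * q % n) ^ 2) :=
          sum_congr rfl fun k _ => by ring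
      _ = q ^ 2 * ∑ k ∈ range n, (k : ℤ) ^ 2 - 2 * q * ∑ k ∈ range n, k * (k * q % n)
          + ∑ k ∈ range n, (k * q % n) ^ 2 := by
          rw [sum_add_distrib, sum_sub_distrib, mul_sum, mul_sum]
      _ = _ := by rw [hperm]; ring
  rw [← hexp]
  exact dvd_sum fun k _ => pow_dvd_pow_of_dvd Int.dvd_self_sub_emod 2

theorem exists_intCast_eq_twelve_mul_dedekindSum {n : ℕ} {q q' : ℤ} (hn : 0 < n)
    (hinv : q' * q ≡ 1 [ZMOD n]) :
    ∃ N : ℤ, (N : ℚ) = 12 * n * dedekindSum q n ∧ N ≡ q + q' [ZMOD n] := by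
  obtain ⟨t, ht⟩ := hinv.dvd
  have hq : IsCoprime q n := ⟨q', t, by linear_combination -ht⟩
  have hn₀ : (n : ℤ) ≠ 0 := by positivity
  set T := ∑ k ∈ range n, (k : ℤ) * (k * q % n)
  obtain ⟨E, hE⟩ := sq_dvd_sum_range_sq_sub hq
  have hS := six_mul_sum_range_natCast_sq (R := ℤ) n
  obtain ⟨M, hM⟩ : (n : ℤ) ∣ 12 * T := hq.symm.dvd_of_dvd_mul_left
    ⟨(q ^ 2 + 1) * (n - 1) * (2 * n - 1) - 6 * n * E, by linear_combination (q ^ 2 + 1) * hS - 6 * hE⟩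
  have hqM : q * M = (q ^ 2 + 1) * (n - 1) * (2 * n - 1) - 6 * n * E :=
    mul_left_cancel₀ hn₀ (by linear_combination -q * hM + (q ^ 2 + 1) * hS - 6 * hE)
  refine ⟨M - 3 * n * (n - 1), ?_, ?_⟩
  · have hn' : (n : ℚ) ≠ 0 := by positivity
    have hMQ : (12 * T : ℚ) = n * M := by exact_mod_cast hM
    apply mul_left_cancel₀ hn'
    push_cast
    linear_combination -hMQ - twelve_mul_sq_mul_dedekindSum hn hq
  · refine Int.modEq_iff_dvd.2 (hq.symm.dvd_of_dvd_mul_left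
      ⟨-t - (q ^ 2 + 1) * (2 * n - 3) + 6 * E + 3 * q * (n - 1), ?_⟩)
    linear_combination -ht - hqM

lemma mul_dvd_exponent_numerator {p q r c qs ps η pc' rc' N : ℤ} (hinv : ps * p + qs * q = 1)
    (hη : η ^ 2 = 1) (hdiv : c ∣ qs + η) (hbez : pc' * p + rc' * r = c)
    (hN : N ≡ q + qs [ZMOD p]) :
    p * c ∣ N * c - rc' * (q + qs - η * ps * p) * r + 2 * η * pc' * p := by
  obtain ⟨u, hu⟩ := hN.symm.dvd
  obtain ⟨m, hm⟩ := hdiv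
  -- Since `ps * p = 1 - qs * q` and `η ^ 2 = 1`, the numerator equals
  -- `c * (N - q - qs) + c * η * ps * p + pc' * p * (qs + η) * (1 + η * q)`.
  exact ⟨u + η * ps + pc' * m * (1 + η * q), by
    linear_combination c * hu + (pc' * p * (1 + η * q)) * hm - (q + qs - η * ps * p) * hbez
      - (pc' * p * q) * hη - (pc' * p * η) * hinv⟩

theorem stmt_16_general (p q r c qs ps η pc' rc' : ℤ) (hp : 0 < p)
    (hinv : ps * p + qs * q = 1)
    (hr : 1 < r) (hc : c = Int.gcd p r)
    (hη : η = 1 ∨ η = -1) (hdiv : c ∣ qs + η)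
    (hbezout : pc' * (p / c) + rc' * (r / c) = 1) :
    ∃ k : ℤ,
      Complex.exp (2 * Real.pi * Complex.I * ((12 * dedekindSum q p : ℚ) : ℂ) / (r : ℂ))
        * Complex.exp (2 * Real.pi * Complex.I *
            ((-(rc' * (q + qs - η * ps * p)) : ℤ) : ℂ) / ((p : ℂ) * c))
        * Complex.exp (2 * Real.pi * Complex.I *
            ((2 * η * pc' : ℤ) : ℂ) / ((r : ℂ) * c))
      = Complex.exp (2 * Real.pi * Complex.I * (k : ℂ) / (r : ℂ)) := by
  lift p to ℕ using hp.le
  have hqs : qs * q ≡ 1 [ZMOD p] := Int.modEq_iff_dvd.2 ⟨ps, by linear_combination -hinv⟩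
  obtain ⟨N, hN, hNmod⟩ := exists_intCast_eq_twelve_mul_dedekindSum (by omega) hqs
  have hcp : c ∣ p := hc ▸ Int.gcd_dvd_left _ _
  have hcr : c ∣ r := hc ▸ Int.gcd_dvd_right _ _
  have hbez : pc' * p + rc' * r = c := by
    linear_combination c * hbezout - pc' * Int.mul_ediv_cancel' hcp - rc' * Int.mul_ediv_cancel' hcr
  obtain ⟨k, hk⟩ := mul_dvd_exponent_numerator hinv (by rcases hη with rfl | rfl <;> norm_num)
    hdiv hbez hNmod
  refine ⟨k, ?_⟩
  have hp0 : p ≠ 0 := by omega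
  have hs : 12 * dedekindSum q p = N / p := by rw [hN]; field_simp
  have hkC : (N : ℂ) * c - rc' * (q + qs - η * ps * p) * r + 2 * η * pc' * p = p * c * k := by
    exact_mod_cast hk
  have hr0 : (r : ℂ) ≠ 0 := Int.cast_ne_zero.2 (by omega)
  have hc0 : (c : ℂ) ≠ 0 := Int.cast_ne_zero.2 (by rw [hc]; positivity)
  rw [← Complex.exp_add, ← Complex.exp_add, hs]
  congr 1
  push_cast
  field_simp
  linear_combination hkC

theorem stmt_16 (p q r c qs ps η pc' rc' : ℤ) (hp : 0 < p)
    (hpq : IsCoprime p q) (hqs : 0 < qs) (hqs' : qs < p)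
    (hinv : ps * p + qs * q = 1)
    (hrodd : Odd r) (hr : 1 < r) (hc : c = Int.gcd p r) (hc1 : 1 < c)
    (hη : η = 1 ∨ η = -1) (hdiv : c ∣ qs + η)
    (hbezout : pc' * (p / c) + rc' * (r / c) = 1) :
    ∃ k : ℤ,
      Complex.exp (2 * Real.pi * Complex.I * ((12 * dedekindSum q p : ℚ) : ℂ) / (r : ℂ))
        * Complex.exp (2 * Real.pi * Complex.I *
            ((-(rc' * (q + qs - η * ps * p)) : ℤ) : ℂ) / ((p : ℂ) * c))
        * Complex.exp (2 * Real.pi * Complex.I *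
            ((2 * η * pc' : ℤ) : ℂ) / ((r : ℂ) * c))
      = Complex.exp (2 * Real.pi * Complex.I * (k : ℂ) / (r : ℂ)) :=
  stmt_16_general p q r c qs ps η pc' rc' hp hinv hr hc hη hdiv hbezout
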